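/- arXiv:2512.17808 — 3 statements merged into one kernel-verified Lean document; each statement's English description precedes it below -/
import Mathlib

section
/- For any t > 0, any polynomial P of degree m ≥ 1, and any z ∈ ℂ, the heat-evolved polynomial satisfies the Gaussian integral representation: e^{-(s/2)∂_z²} P(z) = (-i/√(2πs)) ∫_{iℝ} exp((z-u)²/(2s)) P(u) du, where s = t/(αn) > 0 and the integral is over the imaginary axis (parametrized as u = iy, y ∈ ℝ, du = i dy). -/
/-!
Both sides are linear functionals of `P`. Integrating by parts along the imaginary axis shows
that `J(Q) = ∫ exp((z - iy)²/(2s)) Q(iy) dy` satisfies `J(X Q) = z J(Q) - s J(Q')`, and the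
commutation rule `∂^{k+1} X = X ∂^{k+1} + (k+1) ∂^k` shows that `Q ↦ √(2πs) (e^{-(s/2)∂²} Q)(z)`
satisfies the same recursion. Both equal `√(2πs)` at `Q = 1` (the Gaussian integral), and the
recursion determines a linear functional on `ℂ[X]` from its value at `1`.
-/

open Polynomial MeasureTheory

/-- The backward heat flow operator applied to a polynomial:
`e^{-(s/2)∂_z²} P = Σ_k (-s/2)^k ∂^{2k} P / k!` (a terminating sum). -/
noncomputable def heatFlow (s : ℂ) (P : Polynomial ℂ) : Polynomial ℂ :=
  ∑ k ∈ Finset.range (P.natDegree + 1),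
    ((-s / 2) ^ k / (Nat.factorial k : ℂ)) • (Polynomial.derivative^[2 * k] P)

open Complex

namespace Polynomial

theorem iterate_derivative_X_mul {R : Type*} [Semiring R] (p : R[X]) (n : ℕ) :
    derivative^[n + 1] (X * p) = X * derivative^[n + 1] p + (n + 1) • derivative^[n] p := by
  induction n with
  | zero => simp [derivative_mul, add_comm]
  | succ n ih =>
    rw [Function.iterate_succ_apply' _ (n + 1), ih, map_add, derivative_mul, derivative_X,
      one_mul, derivative_smul, ← Function.iterate_succ_apply' derivative (n + 1),
      ← Function.iterate_succ_apply' derivative n, succ_nsmul _ (n + 1)]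
    abel

theorem linearMap_ext_of_X_mul {R M : Type*} [CommRing R] [AddCommGroup M] [Module R M]
    {L L' : R[X] →ₗ[R] M} (z s : R) (h_one : L 1 = L' 1)
    (hL : ∀ Q, L (X * Q) = z • L Q - s • L (derivative Q))
    (hL' : ∀ Q, L' (X * Q) = z • L' Q - s • L' (derivative Q)) : L = L' := by
  have h_pow : ∀ n, L (X ^ n) = L' (X ^ n) := by
    intro n
    induction n using Nat.strong_induction_on with
    | _ n ih =>
      match n with
      | 0 => simpa using h_one
      | n + 1 =>
        rw [pow_succ', hL, hL', derivative_X_pow, C_mul', map_smul, map_smul, ih n (by omega),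
          ih (n - 1) (by omega)]
  refine lhom_ext' fun n => LinearMap.ext fun a => ?_
  simp [← C_mul_X_pow_eq_monomial, C_mul', h_pow]

end Polynomial

theorem heatFlow_eq_sum_range (s : ℂ) {P : ℂ[X]} {N : ℕ} (hN : P.natDegree < N) :
    heatFlow s P = ∑ k ∈ Finset.range N,
      ((-s / 2) ^ k / (Nat.factorial k : ℂ)) • derivative^[2 * k] P := by
  refine Finset.sum_subset (Finset.range_subset_range.2 hN) fun k _ hk => ?_
  rw [Finset.mem_range, not_lt] at hk
  rw [iterate_derivative_eq_zero (by omega), smul_zero]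

theorem heatFlow_add (s : ℂ) (P Q : ℂ[X]) : heatFlow s (P + Q) = heatFlow s P + heatFlow s Q := by
  have hN := natDegree_add_le P Q
  rw [heatFlow_eq_sum_range s (N := max P.natDegree Q.natDegree + 1) (by omega),
    heatFlow_eq_sum_range s (N := max P.natDegree Q.natDegree + 1) (by omega),
    heatFlow_eq_sum_range s (P := Q) (N := max P.natDegree Q.natDegree + 1) (by omega),
    ← Finset.sum_add_distrib]
  simp only [iterate_map_add, smul_add]

theorem heatFlow_smul (s a : ℂ) (P : ℂ[X]) : heatFlow s (a • P) = a • heatFlow s P := by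
  rw [heatFlow_eq_sum_range s (N := P.natDegree + 1)
    ((natDegree_smul_le a P).trans_lt (Nat.lt_succ_self _)), heatFlow, Finset.smul_sum]
  simp only [iterate_derivative_smul, smul_comm a]

noncomputable def heatFlowₗ (s : ℂ) : ℂ[X] →ₗ[ℂ] ℂ[X] where
  toFun := heatFlow s
  map_add' := heatFlow_add s
  map_smul' := heatFlow_smul s

theorem heatFlow_one (s : ℂ) : heatFlow s 1 = 1 := by
  simp [heatFlow]

theorem heatFlow_coeff_succ_mul (s : ℂ) (k : ℕ) :
    (-s / 2) ^ (k + 1) / ((k + 1).factorial : ℂ) * (2 * k + 2)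
      = -s * ((-s / 2) ^ k / (k.factorial : ℂ)) := by
  rw [Nat.factorial_succ, Nat.cast_mul, pow_succ]
  push_cast
  field_simp

theorem heatFlow_X_mul (s : ℂ) (P : ℂ[X]) :
    heatFlow s (X * P) = X * heatFlow s P - s • heatFlow s (derivative P) := by
  have hXP : (X * P).natDegree < P.natDegree + 1 + 1 := by
    have := natDegree_mul_le (p := (X : ℂ[X])) (q := P)
    rw [natDegree_X] at this
    omega
  rw [heatFlow_eq_sum_range s hXP, heatFlow_eq_sum_range s (N := P.natDegree + 1 + 1) (by omega),
    heatFlow_eq_sum_range s (N := P.natDegree + 1)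
      ((natDegree_derivative_le P).trans_lt (by omega)),
    Finset.sum_range_succ' _ (P.natDegree + 1), Finset.sum_range_succ' _ (P.natDegree + 1)]
  have h_term : ∀ k : ℕ, ((-s / 2) ^ (k + 1) / ((k + 1).factorial : ℂ))
        • derivative^[2 * (k + 1)] (X * P)
      = X * (((-s / 2) ^ (k + 1) / ((k + 1).factorial : ℂ)) • derivative^[2 * (k + 1)] P)
        - s • (((-s / 2) ^ k / (k.factorial : ℂ)) • derivative^[2 * k] (derivative P)) := by
    intro k
    rw [show 2 * (k + 1) = 2 * k + 1 + 1 by ring, iterate_derivative_X_mul,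
      ← Function.iterate_succ_apply, smul_add, mul_smul_comm, ← Nat.cast_smul_eq_nsmul ℂ,
      smul_smul, smul_smul, sub_eq_add_neg, ← neg_smul, ← neg_mul, ← heatFlow_coeff_succ_mul]
    congr 3
    push_cast
    ring
  rw [Finset.sum_congr rfl fun k _ => h_term k, Finset.sum_sub_distrib, mul_add, Finset.mul_sum,
    Finset.smul_sum]
  simp only [mul_zero, pow_zero, Nat.factorial_zero, Nat.cast_one, div_one, one_smul,
    Function.iterate_zero_apply]
  abel

theorem integrable_cexp_quadratic_mul_pow {b : ℂ} (hb : b.re < 0) (c d : ℂ) (n : ℕ) :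
    Integrable fun x : ℝ => cexp (b * x ^ 2 + c * x + d) * (x : ℂ) ^ n := by
  set K := d.re - c.re ^ 2 / (2 * b.re)
  have h_half : 0 < -b.re / 2 := by linarith
  have h_dom : Integrable fun x : ℝ =>
      Real.exp K * (|x| ^ n * Real.exp (-(-b.re / 2) * x ^ 2)) := by
    have := (integrable_rpow_mul_exp_neg_mul_sq h_half (s := n)
      (neg_one_lt_zero.trans_le n.cast_nonneg)).norm.const_mul (Real.exp K)
    simpa [Real.rpow_natCast, abs_mul, Real.abs_exp] using this
  refine h_dom.mono' (by fun_prop) (ae_of_all _ fun x => ?_)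
  have h_re : (b * x ^ 2 + c * x + d).re = b.re * x ^ 2 + c.re * x + d.re := by
    simp [← ofReal_pow]
  have h_sq : (b.re * x + c.re) ^ 2 / (2 * b.re) ≤ 0 :=
    div_nonpos_of_nonneg_of_nonpos (sq_nonneg _) (by linarith)
  -- completing the square: half of the Gaussian decay absorbs the linear term
  have h_split : b.re * x ^ 2 + c.re * x + d.re
      = K + -(-b.re / 2) * x ^ 2 + (b.re * x + c.re) ^ 2 / (2 * b.re) := by
    have : b.re ≠ 0 := hb.ne
    simp only [K]
    field_simp
    ring
  rw [norm_mul, norm_exp, h_re, norm_pow, norm_real, Real.norm_eq_abs, mul_left_comm,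
    ← Real.exp_add, mul_comm]
  gcongr ?_ * Real.exp ?_
  linarith

theorem integrable_cexp_quadratic_mul_eval {b : ℂ} (hb : b.re < 0) (c d a : ℂ) (Q : ℂ[X]) :
    Integrable fun x : ℝ => cexp (b * x ^ 2 + c * x + d) * Q.eval (a * x) := by
  simp_rw [eval_eq_sum_range, Finset.mul_sum]
  refine integrable_finsetSum _ fun k _ => ?_
  refine ((integrable_cexp_quadratic_mul_pow hb c d k).const_mul (Q.coeff k * a ^ k)).congr
    (ae_of_all _ fun x => ?_)
  simp only [mul_pow]
  ring

theorem sq_sub_I_mul_div_eq_quadratic {s : ℝ} (hs : s ≠ 0) (z : ℂ) (y : ℝ) :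
    (z - I * y) ^ 2 / (2 * s)
      = ((-(1 / (2 * s)) : ℝ) : ℂ) * y ^ 2 + (-(I * z) / s) * y + z ^ 2 / (2 * s) := by
  have hsC : (s : ℂ) ≠ 0 := ofReal_ne_zero.2 hs
  push_cast
  field_simp
  linear_combination (y : ℂ) ^ 2 * I_sq

theorem integrable_cexp_sq_sub_I_mul_mul_eval {s : ℝ} (hs : 0 < s) (z : ℂ) (Q : ℂ[X]) :
    Integrable fun y : ℝ => cexp ((z - I * y) ^ 2 / (2 * s)) * Q.eval (I * y) := by
  have hb : ((-(1 / (2 * s)) : ℝ) : ℂ).re < 0 := by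
    rw [ofReal_re, neg_lt_zero]
    positivity
  simpa only [sq_sub_I_mul_div_eq_quadratic hs.ne'] using
    integrable_cexp_quadratic_mul_eval hb _ _ I Q

theorem hasDerivAt_cexp_sq_sub_I_mul_mul_eval {s : ℂ} (hs : s ≠ 0) (z : ℂ) (Q : ℂ[X]) (y : ℝ) :
    HasDerivAt (fun y : ℝ => cexp ((z - I * y) ^ 2 / (2 * s)) * Q.eval (I * y))
      (I / s * (cexp ((z - I * y) ^ 2 / (2 * s))
        * ((X - C z) * Q + C s * derivative Q).eval (I * y))) y := by
  have h_lin : ∀ w : ℂ, HasDerivAt (fun u : ℂ => I * u) I w := fun w => by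
    simpa using (hasDerivAt_id w).const_mul I
  have h_exp := ((((h_lin y).const_sub z).pow 2).div_const (2 * s)).cexp.comp_ofReal
  have h_eval := ((Q.hasDerivAt (I * y)).comp (y : ℂ) (h_lin y)).comp_ofReal
  refine (h_exp.mul h_eval).congr_deriv ?_
  simp only [Function.comp_apply, Pi.pow_apply, eval_add, eval_mul, eval_sub, eval_X, eval_C]
  field_simp
  ring

-- `-i ∫_{iℝ} exp((z - u)²/(2s)) Q(u) du`, with `u = iy`.
noncomputable def imAxisGaussianPairing {s : ℝ} (hs : 0 < s) (z : ℂ) : ℂ[X] →ₗ[ℂ] ℂ where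
  toFun Q := ∫ y : ℝ, cexp ((z - I * y) ^ 2 / (2 * s)) * Q.eval (I * y)
  map_add' P Q := by
    simp only [eval_add, mul_add]
    exact integral_add (integrable_cexp_sq_sub_I_mul_mul_eval hs z P)
      (integrable_cexp_sq_sub_I_mul_mul_eval hs z Q)
  map_smul' a Q := by
    simp only [eval_smul, smul_eq_mul, RingHom.id_apply, ← integral_const_mul]
    congr 1 with y
    ring

theorem imAxisGaussianPairing_apply {s : ℝ} (hs : 0 < s) (z : ℂ) (Q : ℂ[X]) :
    imAxisGaussianPairing hs z Q = ∫ y : ℝ, cexp ((z - I * y) ^ 2 / (2 * s)) * Q.eval (I * y) :=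
  rfl

theorem imAxisGaussianPairing_one {s : ℝ} (hs : 0 < s) (z : ℂ) :
    imAxisGaussianPairing hs z 1 = Real.sqrt (2 * Real.pi * s) := by
  have hb : ((-(1 / (2 * s)) : ℝ) : ℂ).re < 0 := by
    rw [ofReal_re, neg_lt_zero]
    positivity
  have hsC : (s : ℂ) ≠ 0 := ofReal_ne_zero.2 hs.ne'
  have h_sq : z ^ 2 / (2 * s) - (-(I * z) / s) ^ 2 / (4 * ((-(1 / (2 * s)) : ℝ) : ℂ)) = 0 := by
    push_cast
    field_simp
    linear_combination 4 * z ^ 2 * I_sq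
  have h_var : (Real.pi : ℂ) / -((-(1 / (2 * s)) : ℝ) : ℂ) = ((2 * Real.pi * s : ℝ) : ℂ) := by
    push_cast
    field_simp
  simp only [imAxisGaussianPairing_apply, eval_one, mul_one,
    sq_sub_I_mul_div_eq_quadratic hs.ne']
  rw [integral_cexp_quadratic hb, h_sq, exp_zero, mul_one, h_var, Real.sqrt_eq_rpow,
    ofReal_cpow (by positivity)]
  norm_num

theorem imAxisGaussianPairing_X_mul {s : ℝ} (hs : 0 < s) (z : ℂ) (Q : ℂ[X]) :
    imAxisGaussianPairing hs z (X * Q)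
      = z • imAxisGaussianPairing hs z Q - (s : ℂ) • imAxisGaussianPairing hs z (derivative Q) := by
  have hsC : (s : ℂ) ≠ 0 := ofReal_ne_zero.2 hs.ne'
  -- integration by parts without boundary terms: the integrand and its derivative are integrable
  have h_ibp := integral_eq_zero_of_hasDerivAt_of_integrable
    (hasDerivAt_cexp_sq_sub_I_mul_mul_eval hsC z Q)
    ((integrable_cexp_sq_sub_I_mul_mul_eval hs z _).const_mul _)
    (integrable_cexp_sq_sub_I_mul_mul_eval hs z Q)
  rw [integral_const_mul, ← imAxisGaussianPairing_apply hs, mul_eq_zero,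
    div_eq_zero_iff, or_iff_right (by simp [hsC]), sub_mul, C_mul', C_mul', map_add, map_sub,
    map_smul, map_smul] at h_ibp
  simp only [smul_eq_mul] at h_ibp ⊢
  linear_combination h_ibp

theorem imAxisGaussianPairing_eq_sqrt_mul_eval_heatFlow {s : ℝ} (hs : 0 < s) (z : ℂ)
    (P : ℂ[X]) :
    imAxisGaussianPairing hs z P = Real.sqrt (2 * Real.pi * s) * (heatFlow s P).eval z := by
  have h_ext := linearMap_ext_of_X_mul (L := imAxisGaussianPairing hs z)
    (L' := (Real.sqrt (2 * Real.pi * s) : ℂ) • (leval z ∘ₗ heatFlowₗ s)) z s ?_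
    (imAxisGaussianPairing_X_mul hs z) ?_
  · exact LinearMap.congr_fun h_ext P
  · simp [imAxisGaussianPairing_one, heatFlowₗ, heatFlow_one]
  · intro Q
    simp only [heatFlowₗ, LinearMap.smul_apply, LinearMap.coe_comp, LinearMap.coe_mk,
      AddHom.coe_mk, Function.comp_apply, heatFlow_X_mul, leval_apply, eval_sub, eval_mul, eval_X,
      eval_smul, smul_eq_mul]
    ring

theorem heat_flow_gaussian_integral_rep_general
    (P : Polynomial ℂ)
    (t : ℝ) (ht : 0 < t) (α n : ℕ) (hα : 0 < α) (hn : 0 < n)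
    (s : ℝ) (hs : s = t / (α * n)) (z : ℂ) :
    (heatFlow (s : ℂ) P).eval z
      = (-Complex.I / (Real.sqrt (2 * Real.pi * s) : ℂ)) *
          ∫ y : ℝ, Complex.exp ((z - Complex.I * y) ^ 2 / (2 * (s : ℂ)))
            * P.eval (Complex.I * y) * Complex.I := by
  have hs_pos : 0 < s := hs ▸ div_pos ht (mul_pos (Nat.cast_pos.2 hα) (Nat.cast_pos.2 hn))
  have h_sqrt : (Real.sqrt (2 * Real.pi * s) : ℂ) ≠ 0 :=
    ofReal_ne_zero.2 (Real.sqrt_pos.2 (by positivity)).ne'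
  rw [integral_mul_const, ← imAxisGaussianPairing_apply hs_pos,
    imAxisGaussianPairing_eq_sqrt_mul_eval_heatFlow hs_pos]
  field_simp
  rw [I_sq]
  ring

/-- Gaussian contour-integral representation of the heat flow:
`e^{-(s/2)∂_z²} P(z) = (-i/√(2πs)) ∫_{iℝ} exp((z-u)²/(2s)) P(u) du`,
with `s = t/(αn) > 0` and the integral over the imaginary axis parametrized as
`u = iy`, `du = i dy`. -/
theorem heat_flow_gaussian_integral_rep
    (P : Polynomial ℂ) (hP : 1 ≤ P.natDegree)
    (t : ℝ) (ht : 0 < t) (α n : ℕ) (hα : 0 < α) (hn : 0 < n)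
    (s : ℝ) (hs : s = t / (α * n)) (z : ℂ) :
    (heatFlow (s : ℂ) P).eval z
      = (-Complex.I / (Real.sqrt (2 * Real.pi * s) : ℂ)) *
          ∫ y : ℝ, Complex.exp ((z - Complex.I * y) ^ 2 / (2 * (s : ℂ)))
            * P.eval (Complex.I * y) * Complex.I :=
  heat_flow_gaussian_integral_rep_general P t ht α n hα hn s hs z
end

section
/- Let P(z) = ∏_{j=1}^d (z−λ_j)^{α_j} with α = Σα_j, let n ∈ ℕ, t > 0, and let P_t^n = e^{−(t/(2αn))∂_z²} P^n be the heat-evolved n-th power. Then every zero of P_t^n lies within distance 2√t·√(1 + 1/(2nα)) of some λ_j; i.e., the zero set of P_t^n is contained in ⋃_{j=1}^d B(λ_j, 2√t·√(1+1/(2nα))). -/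
/-!
Writing `T = e^{-(s/2)∂²}`, `T` commutes with `∂` and `T(X Q) = X T(Q) - s T(Q')`,
so `H_m = T(X^m)` obeys the Hermite recurrence `H_{m+2} = X H_{m+1} - s (m+1) H_m`.
Comparing consecutive terms gives `|H_m(w)| ≥ (|w|/2)^m` while `|w|² > 4sN`, so the zeros of `H_N`,
`N = nα = deg P^n`, satisfy `|w| ≤ 2√(sN) = 2√t`.

In Taylor coefficients, `N! T(Q)(z)` is the apolarity pairing of `Q` with `H_N(z - X)`,
whose zeros lie within `2√t` of `z`. By a form of Grace's theorem, a polynomial apolar to one with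
all its zeros in an open disk has a zero in that disk: splitting off a zero `a` of the first
polynomial replaces the second by its polar derivative with pole `a`, and by Laguerre's theorem this
creates no zero in a disk that contains `a` but no zero of the original. For `Q = P^n` and the disk
of radius `2√t·√(1 + 1/(2nα)) > 2√t` about `z`, that zero of `P^n` is one of the `λ_j`.
-/

open Polynomial

open Finset Metric
open scoped Nat ComplexConjugate

theorem half_norm_pow_mul_le_norm_of_recurrence {𝕜 : Type*} [NormedDivisionRing 𝕜]
    {u c : ℕ → 𝕜} {w : 𝕜} {N : ℕ} (h₁ : u 1 = w * u 0)
    (hrec : ∀ m, m + 2 ≤ N → u (m + 2) = w * u (m + 1) - c m * u m)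
    (hc : ∀ m, m + 2 ≤ N → 4 * ‖c m‖ ≤ ‖w‖ ^ 2) :
    ∀ m ≤ N, (‖w‖ / 2) ^ m * ‖u 0‖ ≤ ‖u m‖ := by
  have hstep : ∀ m, m + 1 ≤ N → ‖w‖ / 2 * ‖u m‖ ≤ ‖u (m + 1)‖ := by
    intro m
    induction m with
    | zero =>
      intro _
      rw [h₁, norm_mul]
      linarith [mul_nonneg (norm_nonneg w) (norm_nonneg (u 0))]
    | succ m ih =>
      intro hm
      have ih := ih (by omega)
      have htri : ‖w‖ * ‖u (m + 1)‖ - ‖c m‖ * ‖u m‖ ≤ ‖u (m + 2)‖ := by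
        rw [hrec m hm, ← norm_mul, ← norm_mul]
        exact norm_sub_norm_le _ _
      have hcm : ‖c m‖ * ‖u m‖ ≤ ‖w‖ / 2 * ‖u (m + 1)‖ := by
        nlinarith [hc m hm, norm_nonneg (c m), norm_nonneg (u m), norm_nonneg w]
      linarith
  intro m
  induction m with
  | zero => simp
  | succ m ih =>
    intro hm
    calc (‖w‖ / 2) ^ (m + 1) * ‖u 0‖ = ‖w‖ / 2 * ((‖w‖ / 2) ^ m * ‖u 0‖) := by ring
      _ ≤ ‖w‖ / 2 * ‖u m‖ := by gcongr; exact ih (by omega)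
      _ ≤ ‖u (m + 1)‖ := hstep m hm

theorem Multiset.sum_ne_zero_of_forall_mem_closedBall {E : Type*} [NormedAddCommGroup E]
    [NormedSpace ℝ E] {S : Multiset E} (hS : S ≠ 0) {κ : E} {ρ : ℝ} (hρ : ρ < ‖κ‖)
    (h : ∀ u ∈ S, u ∈ closedBall κ ρ) : S.sum ≠ 0 := by
  intro h0
  have hcard : (0 : ℝ) < Multiset.card S := by exact_mod_cast Multiset.card_pos.2 hS
  have hdev : ‖S.sum - Multiset.card S • κ‖ ≤ Multiset.card S * ρ := by
    have hsum : S.sum - Multiset.card S • κ = (S.map (· - κ)).sum := by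
      simp [Multiset.sum_map_sub, Multiset.map_const']
    calc ‖S.sum - Multiset.card S • κ‖ ≤ ((S.map (· - κ)).map (‖·‖)).sum := by
          rw [hsum]; exact norm_multiset_sum_le _
      _ ≤ Multiset.card S • ρ := by
          simpa using Multiset.sum_le_card_nsmul ((S.map (· - κ)).map (‖·‖)) ρ (by
            simpa [← dist_eq_norm] using h)
      _ = Multiset.card S * ρ := nsmul_eq_mul _ _
  rw [h0, zero_sub, norm_neg, ← Nat.cast_smul_eq_nsmul ℝ, norm_smul, Real.norm_natCast] at hdev
  nlinarith

theorem Complex.norm_sq_ofReal_add_conj_mul (e v : ℂ) (R : ℝ) :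
    ‖((R ^ 2 - ‖e‖ ^ 2 : ℝ) : ℂ) + conj e * v‖ ^ 2
      = R ^ 2 * ‖v‖ ^ 2 - (R ^ 2 - ‖e‖ ^ 2) * (‖e - v‖ ^ 2 - R ^ 2) := by
  simp only [Complex.sq_norm, Complex.normSq_apply, Complex.add_re, Complex.add_im,
    Complex.mul_re, Complex.mul_im, Complex.conj_re, Complex.conj_im, Complex.ofReal_re,
    Complex.ofReal_im, Complex.sub_re, Complex.sub_im]
  ring

theorem Complex.norm_ofReal_add_conj_mul_le {e v : ℂ} {R : ℝ} (he : ‖e‖ ≤ R)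
    (hv : R ≤ ‖e - v‖) : ‖((R ^ 2 - ‖e‖ ^ 2 : ℝ) : ℂ) + conj e * v‖ ≤ R * ‖v‖ := by
  have hR : 0 ≤ R := (norm_nonneg e).trans he
  refine (pow_le_pow_iff_left₀ (norm_nonneg _) (by positivity) two_ne_zero).1 ?_
  rw [Complex.norm_sq_ofReal_add_conj_mul, mul_pow]
  nlinarith [pow_le_pow_left₀ (norm_nonneg e) he 2, pow_le_pow_left₀ hR hv 2]

theorem Complex.mul_norm_lt_norm_ofReal_add_conj_mul {e v : ℂ} {R : ℝ} (he : ‖e‖ < R)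
    (hv : ‖e - v‖ < R) : R * ‖v‖ < ‖((R ^ 2 - ‖e‖ ^ 2 : ℝ) : ℂ) + conj e * v‖ := by
  refine lt_of_pow_lt_pow_left₀ 2 (norm_nonneg _) ?_
  rw [Complex.norm_sq_ofReal_add_conj_mul, mul_pow]
  nlinarith [pow_lt_pow_left₀ he (norm_nonneg e) two_ne_zero,
    pow_lt_pow_left₀ hv (norm_nonneg _) two_ne_zero, norm_nonneg e]

theorem exists_mapsTo_closedBall_div_sub {c a w : ℂ} {R : ℝ} (ha : a ∈ ball c R)
    (hw : w ∈ ball c R) :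
    ∃ κ : ℂ, ∃ ρ : ℝ, ρ < ‖κ‖ ∧ 1 ∈ closedBall κ ρ ∧
      ∀ y ∉ ball c R, (a - y) / (w - y) ∈ closedBall κ ρ := by
  rw [mem_ball, Complex.dist_eq] at ha hw
  set e := w - c
  set β := R ^ 2 - ‖e‖ ^ 2
  have hβ : 0 < β := by nlinarith [norm_nonneg e]
  have hβ' : (β : ℂ) ≠ 0 := by exact_mod_cast hβ.ne'
  have hnorm_div : ∀ u : ℂ, ‖u / β‖ = ‖u‖ / β := fun u => by
    rw [norm_div, Complex.norm_real, Real.norm_of_nonneg hβ.le]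
  -- the image of the circle `‖y - c‖ = R` under `y ↦ (a - y) / (w - y)`
  refine ⟨((β : ℂ) + conj e * (w - a)) / β, ‖w - a‖ * R / β, ?_, ?_, fun y hy => ?_⟩
  · rw [hnorm_div, div_lt_div_iff_of_pos_right hβ, mul_comm]
    refine Complex.mul_norm_lt_norm_ofReal_add_conj_mul hw ?_
    rwa [show e - (w - a) = a - c by ring]
  · rw [mem_closedBall, Complex.dist_eq,
      show 1 - ((β : ℂ) + conj e * (w - a)) / β = -(conj e * (w - a) / β) by field_simp; ring,
      norm_neg, hnorm_div, norm_mul, Complex.norm_conj, mul_comm]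
    gcongr
  · rw [mem_ball, not_lt, Complex.dist_eq] at hy
    have hv : w - y ≠ 0 := by
      rintro h
      rw [sub_eq_zero] at h
      subst h
      exact hw.not_ge hy
    rw [mem_closedBall, Complex.dist_eq,
      show (a - y) / (w - y) - ((β : ℂ) + conj e * (w - a)) / β
        = (a - w) * (β + conj e * (w - y)) / β / (w - y) by field_simp; ring,
      norm_div, hnorm_div, norm_mul, norm_sub_rev a w, div_right_comm,
      div_le_div_iff_of_pos_right hβ, div_le_iff₀ (norm_pos_iff.2 hv), mul_assoc]
    exact mul_le_mul_of_nonneg_left (Complex.norm_ofReal_add_conj_mul_le hw.le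
      (by rwa [show e - (w - y) = y - c by ring])) (norm_nonneg _)

namespace Polynomial

section HeatOperator

variable {K : Type*} [Field K]

/-- Truncating at a fixed order `M`, rather than at `natDegree + 1` as `heatFlow` does, makes the
operator linear; every `M` beyond the degree gives the same value. -/
noncomputable def heatOp (s : K) (M : ℕ) : K[X] →ₗ[K] K[X] :=
  ∑ k ∈ range M, ((-s / 2) ^ k / (k ! : K)) • derivative ^ (2 * k)

theorem heatOp_apply (s : K) (M : ℕ) (Q : K[X]) :
    heatOp s M Q = ∑ k ∈ range M, ((-s / 2) ^ k / (k ! : K)) • derivative^[2 * k] Q := by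
  simp [heatOp, Module.End.pow_apply]

theorem heatOp_eq_heatOp_natDegree_succ {s : K} {M : ℕ} {Q : K[X]} (h : Q.natDegree < M) :
    heatOp s M Q = heatOp s (Q.natDegree + 1) Q := by
  rw [heatOp_apply, heatOp_apply]
  refine (sum_subset (range_subset_range.2 h) fun k _ hk => ?_).symm
  rw [mem_range, not_lt] at hk
  rw [iterate_derivative_eq_zero (by omega), smul_zero]

theorem heatOp_congr {s : K} {M M' : ℕ} {Q : K[X]} (h : Q.natDegree < M)
    (h' : Q.natDegree < M') : heatOp s M Q = heatOp s M' Q := by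
  rw [heatOp_eq_heatOp_natDegree_succ h, heatOp_eq_heatOp_natDegree_succ h']

theorem commute_heatOp_derivative (s : K) (M : ℕ) :
    Function.Commute (heatOp s M) (derivative (R := K)) := fun Q => by
  simp only [heatOp_apply, derivative_sum, derivative_smul,
    ← Function.iterate_succ_apply' derivative]
  rfl

theorem heatOp_X_mul [CharZero K] (s : K) (M : ℕ) (Q : K[X]) :
    heatOp s (M + 1) (X * Q) = X * heatOp s (M + 1) Q - s • heatOp s M (derivative Q) := by
  have hcoeff : ∀ j : ℕ, (-s / 2) ^ (j + 1) / ((j + 1) ! : K) * ((2 * (j + 1) : ℕ) : K)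
      = -(s * ((-s / 2) ^ j / (j ! : K))) := fun j => by
    rw [Nat.factorial_succ]
    push_cast
    field_simp
    ring
  simp only [heatOp_apply, mul_comm X, iterate_derivative_mul_X, smul_add, sum_add_distrib,
    sum_mul, smul_mul_assoc]
  rw [sub_eq_add_neg, smul_sum, ← sum_neg_distrib]
  congr 1
  rw [sum_range_succ']
  refine (add_eq_left.2 (by simp)).trans (sum_congr rfl fun j _ => ?_)
  rw [show 2 * (j + 1) - 1 = 2 * j + 1 by omega, Function.iterate_succ_apply, smul_smul,
    ← Nat.cast_smul_eq_nsmul K, smul_smul, hcoeff, neg_smul]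

theorem heatOp_iterate_derivative (s : K) (M j : ℕ) (Q : K[X]) :
    heatOp s M (derivative^[j] Q) = derivative^[j] (heatOp s M Q) :=
  (commute_heatOp_derivative s M).iterate_right j Q

/-- `scaledHermite s m = s^{m/2} He_m(X/√s)`, with `He_m` the probabilists' Hermite polynomial. -/
noncomputable def scaledHermite (s : K) (m : ℕ) : K[X] := heatOp s (m + 1) (X ^ m)

theorem heatOp_X_pow {s : K} {M m : ℕ} (h : m < M) : heatOp s M (X ^ m) = scaledHermite s m :=
  heatOp_congr (by simpa using h) (by simp)

@[simp]
theorem scaledHermite_zero (s : K) : scaledHermite s 0 = 1 := by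
  simp [scaledHermite, heatOp_apply]

@[simp]
theorem scaledHermite_one (s : K) : scaledHermite s 1 = X := by
  simp [scaledHermite, heatOp_apply, sum_range_succ]

theorem scaledHermite_add_two [CharZero K] (s : K) (m : ℕ) :
    scaledHermite s (m + 2) = X * scaledHermite s (m + 1) - (s * (m + 1)) • scaledHermite s m := by
  rw [scaledHermite, pow_succ', heatOp_X_mul, derivative_X_pow, ← smul_eq_C_mul, map_smul,
    heatOp_X_pow (by omega), heatOp_X_pow (by omega), smul_smul]
  push_cast
  ring_nf

theorem iterate_derivative_scaledHermite (s : K) (N j : ℕ) :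
    derivative^[j] (scaledHermite s N) = (N.descFactorial j : K) • scaledHermite s (N - j) := by
  rw [scaledHermite, ← heatOp_iterate_derivative, iterate_derivative_X_pow_eq_smul, map_smul,
    heatOp_X_pow (by omega)]

theorem natDegree_scaledHermite_le (s : K) (N : ℕ) : (scaledHermite s N).natDegree ≤ N := by
  rw [scaledHermite, heatOp_apply]
  refine natDegree_sum_le_of_forall_le _ _ fun k _ => (natDegree_smul_le _ _).trans ?_
  exact (natDegree_iterate_derivative _ _).trans (by simp)

theorem coeff_scaledHermite_self (s : K) (N : ℕ) : (scaledHermite s N).coeff N = 1 := by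
  simp [scaledHermite, heatOp_apply, coeff_iterate_derivative, coeff_X_pow]

theorem scaledHermite_monic (s : K) (N : ℕ) : (scaledHermite s N).Monic :=
  monic_of_natDegree_le_of_coeff_eq_one N (natDegree_scaledHermite_le s N)
    (coeff_scaledHermite_self s N)

theorem natDegree_scaledHermite (s : K) (N : ℕ) : (scaledHermite s N).natDegree = N :=
  natDegree_eq_of_le_of_coeff_ne_zero (natDegree_scaledHermite_le s N)
    (by rw [coeff_scaledHermite_self]; exact one_ne_zero)

end HeatOperator

theorem norm_sq_le_of_isRoot_scaledHermite {s : ℝ} (hs : 0 ≤ s) {N : ℕ} {w : ℂ}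
    (h : (scaledHermite (s : ℂ) N).IsRoot w) : ‖w‖ ^ 2 ≤ 4 * s * N := by
  by_contra! hlt
  have hgrowth := half_norm_pow_mul_le_norm_of_recurrence
    (u := fun m => (scaledHermite (s : ℂ) m).eval w) (c := fun m => (s : ℂ) * (m + 1)) (w := w)
    (by simp) (fun m _ => by simp [scaledHermite_add_two]) (fun m hm => ?_) N le_rfl
  · simp only [scaledHermite_zero, eval_one, norm_one, mul_one, h.eq_zero, norm_zero] at hgrowth
    have hw : ‖w‖ = 0 := by
      have := eq_zero_of_pow_eq_zero (le_antisymm hgrowth (by positivity))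
      linarith [norm_nonneg w]
    rw [hw] at hlt
    nlinarith [(Nat.cast_nonneg N : (0 : ℝ) ≤ N)]
  · have : (m + 1 : ℝ) ≤ N := by exact_mod_cast (by omega : m + 1 ≤ N)
    rw [norm_mul, Complex.norm_real, Real.norm_of_nonneg hs,
      show ((m : ℂ) + 1) = ((m + 1 : ℕ) : ℂ) by push_cast; ring, Complex.norm_natCast]
    push_cast
    nlinarith

section Apolar

variable {R : Type*} [CommRing R]

noncomputable def apolar (n : ℕ) (p q : R[X]) : R :=
  ∑ m ∈ range (n + 1), (-1) ^ m * (m ! : R) * ((n - m)! : R) * p.coeff m * q.coeff (n - m)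

noncomputable def polarDeriv (m : ℕ) (a : R) (q : R[X]) : R[X] :=
  C (m : R) * q + (C a - X) * derivative q

theorem coeff_polarDeriv (m : ℕ) (a : R) (q : R[X]) (k : ℕ) :
    (polarDeriv m a q).coeff k = ((m : R) - k) * q.coeff k + a * (k + 1) * q.coeff (k + 1) := by
  rcases k with _ | k
  · simp [polarDeriv, coeff_derivative, mul_coeff_zero]
  · simp [polarDeriv, sub_mul, coeff_derivative, coeff_C_mul, coeff_X_mul]
    ring

theorem natDegree_polarDeriv_le {n : ℕ} (a : R) {q : R[X]} (hq : q.natDegree ≤ n + 1) :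
    (polarDeriv (n + 1) a q).natDegree ≤ n := by
  refine natDegree_le_iff_coeff_eq_zero.2 fun k hk => ?_
  rw [coeff_polarDeriv, coeff_eq_zero_of_natDegree_lt (p := q) (n := k + 1) (by omega)]
  rcases eq_or_lt_of_le (Nat.succ_le_of_lt hk) with rfl | hk'
  · simp
  · simp [coeff_eq_zero_of_natDegree_lt (hq.trans_lt hk')]

theorem apolar_succ_X_sub_C_mul (a : R) {n : ℕ} {p : R[X]} (hp : p.natDegree ≤ n) (q : R[X]) :
    apolar (n + 1) ((X - C a) * p) q = -apolar n p (polarDeriv (n + 1) a q) := by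
  have hp' : p.coeff (n + 1) = 0 := coeff_eq_zero_of_natDegree_lt (by omega)
  simp only [apolar, sub_mul, coeff_sub, coeff_C_mul, mul_sub, sum_sub_distrib]
  rw [sum_range_succ' _ (n + 1), sum_range_succ _ (n + 1)]
  simp only [coeff_X_mul_zero, coeff_X_mul, hp', mul_zero, zero_mul, add_zero, ← sum_sub_distrib,
    ← sum_neg_distrib]
  refine sum_congr rfl fun m hm => ?_
  have hm : m ≤ n := Nat.lt_succ_iff.1 (mem_range.1 hm)
  rw [coeff_polarDeriv, show n + 1 - (m + 1) = n - m by omega, show n + 1 - m = n - m + 1 by omega,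
    Nat.factorial_succ, Nat.factorial_succ]
  push_cast [hm]
  ring

theorem coeff_comp_neg_X (p : R[X]) (m : ℕ) : (p.comp (-X)).coeff m = (-1) ^ m * p.coeff m := by
  induction p using Polynomial.induction_on' with
  | add p q hp hq => simp [add_comp, hp, hq, mul_add]
  | monomial k b =>
    have : C b * (-X) ^ k = C (b * (-1) ^ k) * X ^ k := by
      rw [neg_pow, C_mul, C_pow, C_neg, C_1]
      ring
    rw [monomial_comp, this, coeff_C_mul_X_pow, coeff_monomial]
    split_ifs with h₁ h₂ h₂
    · rw [h₁]; ring
    all_goals simp_all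

theorem comp_C_sub_X_eq_taylor_comp_neg_X (f : R[X]) (z : R) :
    f.comp (C z - X) = (taylor z f).comp (-X) := by
  rw [taylor_apply, comp_assoc, add_comp, X_comp, C_comp, neg_add_eq_sub]

theorem factorial_mul_coeff_comp_C_sub_X (f : R[X]) (z : R) (m : ℕ) :
    (m ! : R) * (f.comp (C z - X)).coeff m = (-1) ^ m * (derivative^[m] f).eval z := by
  rw [comp_C_sub_X_eq_taylor_comp_neg_X, coeff_comp_neg_X, taylor_coeff,
    ← factorial_smul_hasseDeriv, LinearMap.smul_apply, eval_smul, nsmul_eq_mul]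
  ring

theorem apolar_comp_C_sub_X (f q : R[X]) (z : R) (N : ℕ) :
    apolar N (f.comp (C z - X)) q
      = ∑ m ∈ range (N + 1), ((N - m)! : R) * (derivative^[m] f).eval z * q.coeff (N - m) := by
  refine sum_congr rfl fun m _ => ?_
  have hsign : ((-1 : R) ^ m) ^ 2 = 1 := by rw [← pow_mul, mul_comm, pow_mul]; simp
  linear_combination ((-1) ^ m * ((N - m)! : R) * q.coeff (N - m)) *
      factorial_mul_coeff_comp_C_sub_X f z m +
    ((N - m)! * (derivative^[m] f).eval z * q.coeff (N - m)) * hsign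

end Apolar

theorem apolar_comp_scaledHermite {K : Type*} [Field K] (s z : K) {N : ℕ} {q : K[X]}
    (hq : q.natDegree ≤ N) :
    apolar N ((scaledHermite s N).comp (C z - X)) q = N ! * (heatOp s (N + 1) q).eval z := by
  have hexpand : heatOp s (N + 1) q = ∑ k ∈ range (N + 1), q.coeff k • scaledHermite s k := by
    conv_lhs => rw [as_sum_range' q (N + 1) (by omega), map_sum]
    refine sum_congr rfl fun k hk => ?_
    rw [← smul_X_eq_monomial, map_smul, heatOp_X_pow (mem_range.1 hk)]
  rw [apolar_comp_C_sub_X, hexpand, eval_finsetSum, mul_sum]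
  conv_rhs => rw [← sum_range_reflect]
  refine sum_congr rfl fun m hm => ?_
  have hm : m ≤ N := Nat.lt_succ_iff.1 (mem_range.1 hm)
  rw [iterate_derivative_scaledHermite, eval_smul, eval_smul, smul_eq_mul, smul_eq_mul,
    show N + 1 - 1 - m = N - m by omega, ← Nat.factorial_mul_descFactorial hm]
  push_cast
  ring

theorem eval_polarDeriv_ne_zero {n : ℕ} {q : ℂ[X]} (hq0 : q ≠ 0) (hq : q.natDegree ≤ n + 1)
    {c a w : ℂ} {R : ℝ} (hroots : ∀ y ∈ q.roots, y ∉ ball c R) (ha : a ∈ ball c R)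
    (hw : w ∈ ball c R) : (polarDeriv (n + 1) a q).eval w ≠ 0 := by
  have hqw : q.eval w ≠ 0 := fun h => hroots w ((mem_roots hq0).2 h) hw
  have hcard : q.roots.card ≤ n + 1 := (card_roots' q).trans hq
  obtain ⟨κ, ρ, hρ, h1, hmaps⟩ := exists_mapsTo_closedBall_div_sub ha hw
  -- Laguerre: `polarDeriv / q` at `w` is a sum of `n + 1` points of a disk that avoids `0`.
  set S := q.roots.map (fun y => (a - y) / (w - y)) +
    Multiset.replicate (n + 1 - q.roots.card) 1
  have heval : (polarDeriv (n + 1) a q).eval w = q.eval w * S.sum := by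
    have hterm : ∀ y ∈ q.roots, (a - y) / (w - y) = 1 + (a - w) * (1 / (w - y)) :=
      fun y hy => by
        have : w - y ≠ 0 := sub_ne_zero.2 fun h => hroots y hy (h ▸ hw)
        field_simp
        ring
    simp only [polarDeriv, eval_add, eval_mul, eval_C, eval_sub, eval_X,
      (IsAlgClosed.splits q).eval_derivative_eq_eval_mul_sum hqw, S, Multiset.sum_add,
      Multiset.map_congr rfl hterm, Multiset.sum_map_add, Multiset.sum_map_mul_left,
      Multiset.map_const', Multiset.sum_replicate, nsmul_eq_mul]
    push_cast [hcard]
    ring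
  rw [heval]
  refine mul_ne_zero hqw (Multiset.sum_ne_zero_of_forall_mem_closedBall ?_ hρ fun u hu => ?_)
  · rw [← Multiset.card_pos]
    simp [S]
    omega
  · rcases Multiset.mem_add.1 hu with hu | hu
    · obtain ⟨y, hy, rfl⟩ := Multiset.mem_map.1 hu
      exact hmaps y (hroots y hy)
    · rwa [Multiset.eq_of_mem_replicate hu]

theorem exists_isRoot_mem_ball_of_apolar_eq_zero {c : ℂ} {R : ℝ} (hR : 0 < R) {n : ℕ}
    {p q : ℂ[X]} (hp0 : p ≠ 0) (hp : p.natDegree = n) (hroots : ∀ x ∈ p.roots, x ∈ ball c R)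
    (hq : q.natDegree ≤ n) (h : apolar n p q = 0) : ∃ w ∈ ball c R, q.IsRoot w := by
  induction n generalizing p q with
  | zero =>
    refine ⟨c, mem_ball_self hR, ?_⟩
    have hp0' : p.coeff 0 ≠ 0 := fun h0 => hp0 (by rw [eq_C_of_natDegree_eq_zero hp, h0, C_0])
    have hq0 : q.coeff 0 = 0 := by simpa [apolar, hp0'] using h
    rw [eq_C_of_natDegree_eq_zero (Nat.le_zero.1 hq), hq0, C_0]
    simp
  | succ n ih =>
    by_contra! hq_roots
    obtain ⟨a, ha⟩ :=
      Complex.exists_root (natDegree_pos_iff_degree_pos.1 (by omega : 0 < p.natDegree))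
    obtain ⟨p₁, rfl⟩ := dvd_iff_isRoot.2 ha
    have hp₁0 : p₁ ≠ 0 := right_ne_zero_of_mul hp0
    have hp₁ : p₁.natDegree = n := by
      rw [natDegree_mul (X_sub_C_ne_zero a) hp₁0, natDegree_X_sub_C] at hp
      omega
    have hq0 : q ≠ 0 := by
      rintro rfl
      exact hq_roots c (mem_ball_self hR) (by simp)
    rw [apolar_succ_X_sub_C_mul a hp₁.le, neg_eq_zero] at h
    obtain ⟨w, hw, hroot⟩ := ih hp₁0 hp₁
      (fun x hx => hroots x (by rw [roots_mul hp0]; exact Multiset.mem_add.2 (Or.inr hx)))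
      (natDegree_polarDeriv_le a hq) h
    exact eval_polarDeriv_ne_zero hq0 hq (fun y hy hyb => hq_roots y hyb (isRoot_of_mem_roots hy))
      (hroots a ((mem_roots hp0).2 ha)) hw hroot

theorem exists_eq_of_isRoot_prod_X_sub_C_pow {R ι : Type*} [CommRing R] [IsDomain R]
    {S : Finset ι} {lam : ι → R} {k : ι → ℕ} {w : R}
    (h : (∏ j ∈ S, (X - C (lam j)) ^ k j).IsRoot w) : ∃ j ∈ S, w = lam j := by
  rw [IsRoot.def, eval_prod] at h
  obtain ⟨j, hj, hj0⟩ := prod_eq_zero_iff.1 h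
  rw [eval_pow, eval_sub, eval_X, eval_C] at hj0
  exact ⟨j, hj, sub_eq_zero.1 (eq_zero_of_pow_eq_zero hj0)⟩

end Polynomial

theorem heatFlow_eq_heatOp (s : ℂ) (P : ℂ[X]) :
    heatFlow s P = heatOp s (P.natDegree + 1) P :=
  (heatOp_apply s _ P).symm

theorem exists_isRoot_mem_ball_of_eval_heatFlow_eq_zero {s : ℝ} (hs : 0 ≤ s) {Q : ℂ[X]} {z : ℂ}
    (hz : (heatFlow s Q).eval z = 0) {R : ℝ} (hR : 0 < R) (hsR : 4 * s * Q.natDegree < R ^ 2) :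
    ∃ w ∈ ball z R, Q.IsRoot w := by
  have hp0 : (scaledHermite (s : ℂ) Q.natDegree).comp (C z - X) ≠ 0 := by
    rw [Ne, comp_C_sub_X_eq_taylor_comp_neg_X, comp_neg_X_eq_zero_iff, taylor_eq_zero]
    exact (scaledHermite_monic _ _).ne_zero
  have hp : ((scaledHermite (s : ℂ) Q.natDegree).comp (C z - X)).natDegree = Q.natDegree := by
    rw [natDegree_comp, natDegree_scaledHermite, ← neg_sub, natDegree_neg, natDegree_X_sub_C,
      mul_one]
  set p := (scaledHermite (s : ℂ) Q.natDegree).comp (C z - X)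
  have hroots : ∀ x ∈ p.roots, x ∈ ball z R := fun x hx => by
    have := norm_sq_le_of_isRoot_scaledHermite hs (by simpa [p] using isRoot_of_mem_roots hx)
    rw [mem_ball, Complex.dist_eq, norm_sub_rev]
    exact lt_of_pow_lt_pow_left₀ 2 hR.le (by linarith)
  refine exists_isRoot_mem_ball_of_apolar_eq_zero hR hp0 hp hroots le_rfl ?_
  rw [apolar_comp_scaledHermite _ _ le_rfl, ← heatFlow_eq_heatOp, hz, mul_zero]

theorem heat_evolved_power_zeros_near_initial_general
    (d : ℕ) (lam : Fin d → ℂ)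
    (a : Fin d → ℕ) (A : ℕ) (hA : A = ∑ j, a j)
    (n : ℕ) (t : ℝ) (ht : 0 < t)
    (Pn : Polynomial ℂ) (hPn : Pn = ∏ j, (X - C (lam j)) ^ (n * a j)) (z : ℂ)
    (hz : (heatFlow ((t : ℂ) / ((A : ℂ) * (n : ℂ))) Pn).eval z = 0) :
    ∃ j, ‖z - lam j‖
        ≤ 2 * Real.sqrt t * Real.sqrt (1 + 1 / (2 * (n : ℝ) * (A : ℝ))) := by
  have hdeg : Pn.natDegree = n * A := by
    rw [hPn, natDegree_prod_of_monic _ _ fun j _ => (monic_X_sub_C _).pow _]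
    simp [hA, mul_sum]
  set s : ℝ := t / (A * n)
  set R := 2 * Real.sqrt t * Real.sqrt (1 + 1 / (2 * (n : ℝ) * (A : ℝ)))
  have hR : 0 < R := by positivity
  have hsR : 4 * s * Pn.natDegree < R ^ 2 := by
    rcases eq_or_ne (n * A) 0 with hN | hN
    · rw [hdeg, hN, Nat.cast_zero, mul_zero]
      positivity
    have hnA : (0 : ℝ) < n * A := by exact_mod_cast Nat.pos_of_ne_zero hN
    have hsN : s * (n * A : ℕ) = t := by
      rw [Nat.cast_mul, mul_comm (n : ℝ)]
      exact div_mul_cancel₀ t (by linarith)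
    have : 0 < 1 / (2 * (n : ℝ) * A) := one_div_pos.2 (by linarith)
    rw [hdeg, mul_assoc, hsN, mul_pow, mul_pow, Real.sq_sqrt ht.le, Real.sq_sqrt (by positivity)]
    nlinarith
  obtain ⟨w, hw, hroot⟩ := exists_isRoot_mem_ball_of_eval_heatFlow_eq_zero (by positivity)
    (by simpa [s] using hz) hR hsR
  obtain ⟨j, -, rfl⟩ := exists_eq_of_isRoot_prod_X_sub_C_pow (hPn ▸ hroot)
  exact ⟨j, by rw [← Complex.dist_eq]; exact (mem_ball'.1 hw).le⟩

/-- Every zero of the heat-evolved power `P_t^n = e^{−(t/(2αn))∂_z²} P^n`, where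
`P^n(z) = ∏_j (z−λ_j)^{nα_j}` and `α = Σ_j α_j`, lies within distance
`2√t·√(1 + 1/(2nα))` of some initial zero `λ_j`. -/
theorem heat_evolved_power_zeros_near_initial
    (d : ℕ) (lam : Fin d → ℂ) (hinj : Function.Injective lam)
    (a : Fin d → ℕ) (hpos : ∀ j, 0 < a j) (A : ℕ) (hA : A = ∑ j, a j)
    (n : ℕ) (hn : 0 < n) (t : ℝ) (ht : 0 < t)
    (Pn : Polynomial ℂ) (hPn : Pn = ∏ j, (X - C (lam j)) ^ (n * a j)) (z : ℂ)
    (hz : (heatFlow ((t : ℂ) / ((A : ℂ) * (n : ℂ))) Pn).eval z = 0) :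
    ∃ j, ‖z - lam j‖
        ≤ 2 * Real.sqrt t * Real.sqrt (1 + 1 / (2 * (n : ℝ) * (A : ℝ))) :=
  heat_evolved_power_zeros_near_initial_general d lam a A hA n t ht Pn hPn z hz
end

section
/- Fix distinct λ_1,…,λ_d ∈ ℂ, α_j > 0, α = Σα_j, and t ≠ 0. For every ε with 0 < ε < (1/2)·min_{i≠j}|λ_i − λ_j|, there exists R > 0 such that for all z ∈ ℂ with |z| > R, the polynomial Q_{z,t}(u) = (t/α)Σ_j α_j ∏_{k≠j}(u−λ_k) + (u−z)∏_j(u−λ_j) has exactly one root in the disk B(z, ε) and exactly one root in each disk B(λ_j, ε), j = 1,…,d; in particular all d+1 roots of Q_{z,t} are simple. -/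
/-!
Write `Q_z = Σ_j c_j ∏_{k≠j} (X - λ_k) + (X - z) ∏_j (X - λ_j)` with `c_j = t α_j / α`.
A root `u` of `Q_z` different from every `λ_k` satisfies `u - z = -Σ_j c_j / (u - λ_j)`, so once
`|z|` is large every root lies within `ε` of `z` or of some `λ_j`. The roots sum to
`z + Σ_j λ_j`, so they cannot all lie near the `λ_j`: some root is near `z`. For each `j`,
`|Q_z(λ_j)| = |c_j ∏_{k≠j} (λ_j - λ_k)|` does not depend on `z`, while it is the product of the
distances from `λ_j` to the roots; one of these distances is about `|z|`, so some root lies within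
`ε` of `λ_j`. Now `d + 1` roots meet each of the `d + 1` pairwise disjoint disks, hence each disk
contains exactly one root, counted with multiplicity, and every root is simple.
-/

open Polynomial Finset

namespace Multiset

theorem sum_card_filter_le_card {α ι : Type*} [Fintype ι] (p : ι → α → Prop)
    [∀ i, DecidablePred (p i)] (hp : ∀ x i j, p i x → p j x → i = j) (m : Multiset α) :
    ∑ i, card (m.filter (p i)) ≤ card m := by
  induction m using Multiset.induction with
  | empty => simp
  | cons a s ih =>
    have hle : #{i | p i a} ≤ 1 := Finset.card_le_one.2 fun i hi j hj =>
      hp a i j (Finset.mem_filter.1 hi).2 (Finset.mem_filter.1 hj).2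
    have hsplit : ∑ i, card ((a ::ₘ s).filter (p i)) =
        #{i | p i a} + ∑ i, card (s.filter (p i)) := by
      simp only [filter_cons, card_add, sum_add_distrib, Finset.card_filter]
      congr 1
      exact Finset.sum_congr rfl fun i _ => by split_ifs <;> simp
    rw [hsplit, card_cons]
    omega

theorem card_filter_norm_sub_lt_eq_one {E κ : Type*} [SeminormedAddCommGroup E] [Fintype κ]
    {m : Multiset E} {c : κ → E} {ε : ℝ} (hsep : _root_.Pairwise fun i j => 2 * ε < ‖c i - c j‖)
    (hcard : card m = Fintype.card κ) (hmem : ∀ i, ∃ x ∈ m, ‖x - c i‖ < ε) (i : κ) :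
    card (m.filter (‖· - c i‖ < ε)) = 1 := by
  have hdisj : ∀ x i j, ‖x - c i‖ < ε → ‖x - c j‖ < ε → i = j := by
    intro x i j hi hj
    by_contra hij
    have := norm_sub_le_norm_sub_add_norm_sub (c i) x (c j)
    rw [norm_sub_rev (c i) x] at this
    linarith [hsep hij]
  have hpos : ∀ i ∈ (univ : Finset κ), 1 ≤ card (m.filter (‖· - c i‖ < ε)) := fun i _ =>
    let ⟨x, hx, hxi⟩ := hmem i
    card_pos_iff_exists_mem.2 ⟨x, mem_filter.2 ⟨hx, hxi⟩⟩
  have hsum : ∑ _i : κ, 1 = ∑ i, card (m.filter (‖· - c i‖ < ε)) :=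
    le_antisymm (Finset.sum_le_sum hpos) <| by
      simpa [hcard] using sum_card_filter_le_card _ hdisj m
  exact ((Finset.sum_eq_sum_iff_of_le hpos).1 hsum i (mem_univ i)).symm

end Multiset

namespace Polynomial

theorem eval_derivative_ne_zero_of_count_roots_le_one {R : Type*} [CommRing R] [IsDomain R]
    [DecidableEq R] {p : R[X]} {u : R} (hp : p ≠ 0) (hu : p.IsRoot u)
    (hcount : p.roots.count u ≤ 1) : p.derivative.eval u ≠ 0 := by
  intro hder
  have := (one_lt_rootMultiplicity_iff_isRoot hp).2 ⟨hu, hder⟩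
  rw [← count_roots] at this
  omega

theorem Monic.mul_pow_le_norm_eval {K : Type*} [NormedField K] {p : K[X]} (hp : p.Monic)
    (hsplit : p.Splits) {μ r₀ : K} (hr₀ : r₀ ∈ p.roots) {L δ : ℝ} (hL : L ≤ ‖μ - r₀‖)
    (hδ : 0 ≤ δ) (hroots : ∀ r ∈ p.roots, δ ≤ ‖μ - r‖) :
    L * δ ^ (Multiset.card p.roots - 1) ≤ ‖p.eval μ‖ := by
  obtain ⟨s, hs⟩ := Multiset.exists_cons_of_mem hr₀
  have hrest : δ ^ Multiset.card s ≤ (s.map (‖μ - ·‖)).prod := by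
    simpa using Multiset.prod_map_le_prod_map₀ (s := s) (fun _ => δ) (‖μ - ·‖)
      (fun _ _ => hδ) fun r hr => hroots r (hs ▸ Multiset.mem_cons_of_mem hr)
  have hnorm : ‖(s.map (μ - ·)).prod‖ = (s.map (‖μ - ·‖)).prod := by
    simpa [Multiset.map_map] using map_multiset_prod (normHom (α := K)) (s.map (μ - ·))
  rw [hsplit.eval_eq_prod_roots_of_monic hp, hs, Multiset.map_cons, Multiset.prod_cons,
    norm_mul, hnorm, Multiset.card_cons, Nat.add_sub_cancel]
  exact mul_le_mul hL hrest (pow_nonneg hδ _) (norm_nonneg _)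

end Polynomial

section Algebraic

variable {R ι : Type*} [CommRing R] [Fintype ι] [DecidableEq ι] (lam c : ι → R) (z : R)

noncomputable def saddlePoly : R[X] :=
  ∑ j, C (c j) * ∏ k ∈ univ.erase j, (X - C (lam k)) + (X - C z) * ∏ j, (X - C (lam j))

@[simp]
theorem eval_saddlePoly (u : R) : (saddlePoly lam c z).eval u =
    ∑ j, c j * ∏ k ∈ univ.erase j, (u - lam k) + (u - z) * ∏ j, (u - lam j) := by
  simp [saddlePoly, eval_prod, eval_finsetSum]

theorem eval_saddlePoly_lam (j : ι) :
    (saddlePoly lam c z).eval (lam j) = c j * ∏ k ∈ univ.erase j, (lam j - lam k) := by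
  rw [eval_saddlePoly, prod_eq_zero (mem_univ j) (sub_self _), mul_zero, add_zero]
  refine sum_eq_single j (fun i _ hij => ?_) (by simp)
  rw [prod_eq_zero (mem_erase.2 ⟨Ne.symm hij, mem_univ j⟩) (sub_self _), mul_zero]

theorem saddlePoly_eq_add_prod_option : saddlePoly lam c z =
    ∑ j, C (c j) * ∏ k ∈ univ.erase j, (X - C (lam k)) +
      ∏ o : Option ι, (X - C (o.elim z lam)) := by
  rw [saddlePoly, Fintype.prod_option]
  rfl

variable [Nontrivial R]

theorem degree_sum_C_mul_prod_erase_lt :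
    (∑ j, C (c j) * ∏ k ∈ univ.erase j, (X - C (lam k))).degree < Fintype.card ι := by
  refine (degree_lt_iff_coeff_zero _ _).2 fun n hn => ?_
  rw [finsetSum_coeff]
  refine sum_eq_zero fun j _ => coeff_eq_zero_of_natDegree_lt ?_
  refine (natDegree_C_mul_le _ _).trans_lt (lt_of_lt_of_le ?_ hn)
  rw [natDegree_finsetProd_X_sub_C_eq_card, card_erase_of_mem (mem_univ j), card_univ]
  exact Nat.sub_lt (Fintype.card_pos_iff.2 ⟨j⟩) zero_lt_one

omit [DecidableEq ι] in
theorem natDegree_prod_option_X_sub_C :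
    (∏ o : Option ι, (X - C (o.elim z lam))).natDegree = Fintype.card ι + 1 := by
  rw [natDegree_finsetProd_X_sub_C_eq_card, card_univ, Fintype.card_option]

theorem degree_sum_C_mul_prod_erase_lt_degree_prod_option :
    (∑ j, C (c j) * ∏ k ∈ univ.erase j, (X - C (lam k))).degree <
      (∏ o : Option ι, (X - C (o.elim z lam))).degree := by
  rw [degree_eq_natDegree (monic_prod_of_monic _ _ fun o _ => monic_X_sub_C _).ne_zero,
    natDegree_prod_option_X_sub_C]
  exact (degree_sum_C_mul_prod_erase_lt lam c).trans (by exact_mod_cast Nat.lt_succ_self _)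

theorem saddlePoly_monic : (saddlePoly lam c z).Monic := by
  rw [saddlePoly_eq_add_prod_option]
  exact (monic_prod_of_monic _ _ fun o _ => monic_X_sub_C _).add_of_right
    (degree_sum_C_mul_prod_erase_lt_degree_prod_option lam c z)

theorem natDegree_saddlePoly : (saddlePoly lam c z).natDegree = Fintype.card ι + 1 := by
  rw [saddlePoly_eq_add_prod_option, natDegree_add_eq_right_of_degree_lt
    (degree_sum_C_mul_prod_erase_lt_degree_prod_option lam c z), natDegree_prod_option_X_sub_C]

theorem nextCoeff_saddlePoly : (saddlePoly lam c z).nextCoeff = -(z + ∑ j, lam j) := by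
  have hlow := (degree_lt_iff_coeff_zero _ _).1 (degree_sum_C_mul_prod_erase_lt lam c) _ le_rfl
  have hprod := prod_X_sub_C_nextCoeff (s := univ) (Option.elim · z lam)
  rw [nextCoeff_of_natDegree_pos (by rw [natDegree_prod_option_X_sub_C]; omega),
    natDegree_prod_option_X_sub_C, Nat.add_sub_cancel, Fintype.sum_option] at hprod
  rw [nextCoeff_of_natDegree_pos (by rw [natDegree_saddlePoly]; omega), natDegree_saddlePoly,
    saddlePoly_eq_add_prod_option, coeff_add, Nat.add_sub_cancel, hlow, zero_add, hprod]
  rfl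

end Algebraic

section RootsOverAlgClosed

variable {K ι : Type*} [Field K] [IsAlgClosed K] [Fintype ι] [DecidableEq ι] (lam c : ι → K) (z : K)

theorem card_roots_saddlePoly : Multiset.card (saddlePoly lam c z).roots = Fintype.card ι + 1 := by
  rw [← natDegree_saddlePoly lam c z, (IsAlgClosed.splits _).natDegree_eq_card_roots]

theorem sum_roots_saddlePoly : (saddlePoly lam c z).roots.sum = z + ∑ j, lam j := by
  have := (IsAlgClosed.splits _).nextCoeff_eq_neg_sum_roots_of_monic (saddlePoly_monic lam c z)
  rwa [nextCoeff_saddlePoly, neg_inj, eq_comm] at this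

end RootsOverAlgClosed

theorem pairwise_norm_sub_option_elim_gt {E ι : Type*} [SeminormedAddCommGroup E]
    {lam : ι → E} {z : E} {ε : ℝ} (hsep : Pairwise fun i j => 2 * ε < ‖lam i - lam j‖)
    (hz : ∀ k, 2 * ε < ‖z - lam k‖) :
    Pairwise fun o o' : Option ι => 2 * ε < ‖o.elim z lam - o'.elim z lam‖
  | none, none, h => absurd rfl h
  | none, some k, _ => hz k
  | some k, none, _ => by
    show 2 * ε < ‖lam k - z‖
    rw [norm_sub_rev]
    exact hz k
  | some i, some j, h => hsep fun hij => h (congrArg some hij)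

section Analytic

variable {K ι : Type*} [NormedField K] [Fintype ι] [DecidableEq ι] (lam c : ι → K) (z : K)

theorem eval_saddlePoly_eq_prod_mul {u : K} (hu : ∀ k, u ≠ lam k) :
    (saddlePoly lam c z).eval u = (∏ k, (u - lam k)) * (u - z + ∑ j, c j / (u - lam j)) := by
  have herase : ∀ j, ∏ k ∈ univ.erase j, (u - lam k) = (∏ k, (u - lam k)) / (u - lam j) :=
    fun j => eq_div_of_mul_eq (sub_ne_zero.2 (hu j)) <| by
      rw [mul_comm]
      exact mul_prod_erase univ (fun k => u - lam k) (mem_univ j)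
  rw [eval_saddlePoly, mul_add, mul_sum, add_comm, mul_comm]
  congr 1
  exact sum_congr rfl fun j _ => by rw [herase]; ring

theorem norm_sub_le_of_isRoot_saddlePoly {u : K} (hu : (saddlePoly lam c z).IsRoot u) {δ : ℝ}
    (hδ : 0 < δ) (hfar : ∀ k, δ ≤ ‖u - lam k‖) : ‖u - z‖ ≤ (∑ j, ‖c j‖) / δ := by
  have hne : ∀ k, u ≠ lam k := fun k h => by
    simpa [h] using hδ.trans_le (hfar k)
  have hprod : ∏ k, (u - lam k) ≠ 0 := prod_ne_zero_iff.2 fun k _ => sub_ne_zero.2 (hne k)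
  have hsum : u - z = -∑ j, c j / (u - lam j) := by
    have := hu.eq_zero
    rw [eval_saddlePoly_eq_prod_mul lam c z hne] at this
    exact eq_neg_of_add_eq_zero_left ((mul_eq_zero.1 this).resolve_left hprod)
  calc ‖u - z‖ = ‖∑ j, c j / (u - lam j)‖ := by rw [hsum, norm_neg]
    _ ≤ ∑ j, ‖c j‖ / δ := (norm_sum_le _ _).trans <| sum_le_sum fun j _ => by
        rw [norm_div]; exact div_le_div_of_nonneg_left (norm_nonneg _) hδ (hfar j)
    _ = (∑ j, ‖c j‖) / δ := (sum_div _ _ _).symm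

theorem exists_norm_sub_option_elim_lt_of_isRoot_saddlePoly {ε D : ℝ} (hε : 0 < ε)
    (hD : 2 * (∑ j, ‖c j‖) / ε < D) (hfar : ∀ k, D ≤ ‖z - lam k‖) {u : K}
    (hu : (saddlePoly lam c z).IsRoot u) : ∃ o : Option ι, ‖u - o.elim z lam‖ < ε := by
  by_contra! hout
  set S := ∑ j, ‖c j‖
  have hS : 0 ≤ S := sum_nonneg fun j _ => norm_nonneg _
  have hnear : ‖u - z‖ ≤ S / ε :=
    norm_sub_le_of_isRoot_saddlePoly lam c z hu hε fun k => hout (some k)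
  -- The crude bound `hnear` keeps `u` far from every `λ_k`, which sharpens it to `‖u - z‖ < ε`.
  have hSD : S / ε < D - S / ε := by
    rw [mul_div_assoc] at hD
    linarith
  have hfar' : ∀ k, D - S / ε ≤ ‖u - lam k‖ := fun k => by
    have := norm_sub_le_norm_sub_add_norm_sub z u (lam k)
    rw [norm_sub_rev z u] at this
    linarith [hfar k]
  have hsmall : S / (D - S / ε) < ε := by
    have hpos : 0 < D - S / ε := (div_nonneg hS hε.le).trans_lt hSD
    rw [div_lt_iff₀ hpos]
    calc S = ε * (S / ε) := by field_simp
      _ < ε * (D - S / ε) := mul_lt_mul_of_pos_left hSD hε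
  have hnear' : ‖u - z‖ ≤ S / (D - S / ε) :=
    norm_sub_le_of_isRoot_saddlePoly lam c z hu ((div_nonneg hS hε.le).trans_lt hSD) hfar'
  exact (hout none).not_gt (hnear'.trans_lt hsmall)

variable [IsAlgClosed K]

theorem exists_mem_roots_saddlePoly_norm_sub_lt {ε M : ℝ} (hM : ∀ k, ‖lam k‖ ≤ M)
    (hz : (Fintype.card ι + 1) * (M + ε) + Fintype.card ι * M < ‖z‖)
    (hloc : ∀ u ∈ (saddlePoly lam c z).roots, ∃ o : Option ι, ‖u - o.elim z lam‖ < ε) :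
    ∃ r ∈ (saddlePoly lam c z).roots, ‖r - z‖ < ε := by
  by_contra! hfar
  have hroot : ∀ r ∈ (saddlePoly lam c z).roots, ‖r‖ ≤ M + ε := fun r hr => by
    obtain ⟨_ | k, hk⟩ := hloc r hr
    · exact absurd hk (not_lt.2 (hfar r hr))
    · change ‖r - lam k‖ < ε at hk
      linarith [norm_sub_norm_le r (lam k), hM k]
  have hsum : ‖z + ∑ j, lam j‖ ≤ (Fintype.card ι + 1) * (M + ε) := by
    rw [← sum_roots_saddlePoly lam c z]
    refine (norm_multiset_sum_le _).trans ?_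
    refine (Multiset.sum_le_card_nsmul _ (M + ε) ?_).trans_eq ?_
    · intro x hx
      obtain ⟨r, hr, rfl⟩ := Multiset.mem_map.1 hx
      exact hroot r hr
    · rw [Multiset.card_map, card_roots_saddlePoly, nsmul_eq_mul]
      push_cast
      ring
  have hlam : ‖∑ j, lam j‖ ≤ Fintype.card ι * M :=
    (norm_sum_le _ _).trans (by simpa using sum_le_sum fun j (_ : j ∈ univ) => hM j)
  have := norm_sub_le (z + ∑ j, lam j) (∑ j, lam j)
  rw [add_sub_cancel_right] at this
  linarith

theorem exists_mem_roots_saddlePoly_norm_sub_lam_lt {ε : ℝ} (hε : 0 ≤ ε) {r₀ : K}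
    (hr₀ : r₀ ∈ (saddlePoly lam c z).roots) (hr₀z : ‖r₀ - z‖ < ε) (j : ι)
    (hz : ‖c j * ∏ k ∈ univ.erase j, (lam j - lam k)‖ < (‖z - lam j‖ - ε) * ε ^ Fintype.card ι) :
    ∃ r ∈ (saddlePoly lam c z).roots, ‖r - lam j‖ < ε := by
  by_contra! hfar
  have hL : ‖z - lam j‖ - ε ≤ ‖lam j - r₀‖ := by
    have := norm_sub_le_norm_sub_add_norm_sub z r₀ (lam j)
    rw [norm_sub_rev z r₀, norm_sub_rev r₀ (lam j)] at this
    linarith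
  have := (saddlePoly_monic lam c z).mul_pow_le_norm_eval (IsAlgClosed.splits _) hr₀ hL hε
    fun r hr => by rw [norm_sub_rev]; exact hfar r hr
  rw [card_roots_saddlePoly, Nat.add_sub_cancel, eval_saddlePoly_lam] at this
  linarith

theorem saddlePoly_roots_localized_of_lt_norm {ε M B : ℝ} (hε : 0 < ε)
    (hsep : Pairwise fun i j => 2 * ε < ‖lam i - lam j‖) (hM0 : 0 ≤ M) (hM : ∀ k, ‖lam k‖ ≤ M)
    (hB0 : 0 ≤ B) (hB : ∀ j, ‖c j * ∏ k ∈ univ.erase j, (lam j - lam k)‖ ≤ B)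
    (hz : (2 * Fintype.card ι + 2) * (M + ε) + 2 * (∑ j, ‖c j‖) / ε + B / ε ^ Fintype.card ι
      < ‖z‖) :
    (∀ o : Option ι, ((saddlePoly lam c z).roots.filter (‖· - o.elim z lam‖ < ε)).card = 1) ∧
      ∀ u, (saddlePoly lam c z).IsRoot u → (derivative (saddlePoly lam c z)).eval u ≠ 0 := by
  have h2S : 0 ≤ 2 * (∑ j, ‖c j‖) / ε := by positivity
  have hBε : 0 ≤ B / ε ^ Fintype.card ι := by positivity
  have hfar : ∀ k, ‖z‖ - M ≤ ‖z - lam k‖ := fun k => by linarith [norm_sub_norm_le z (lam k), hM k]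
  have hloc : ∀ u ∈ (saddlePoly lam c z).roots, ∃ o : Option ι, ‖u - o.elim z lam‖ < ε :=
    fun u hu => exists_norm_sub_option_elim_lt_of_isRoot_saddlePoly lam c z hε
      (D := ‖z‖ - M) (by nlinarith) hfar (isRoot_of_mem_roots hu)
  obtain ⟨r₀, hr₀, hr₀z⟩ := exists_mem_roots_saddlePoly_norm_sub_lt lam c z hM (by nlinarith) hloc
  have hlam : ∀ j, ∃ r ∈ (saddlePoly lam c z).roots, ‖r - lam j‖ < ε := fun j =>
    exists_mem_roots_saddlePoly_norm_sub_lam_lt lam c z hε.le hr₀ hr₀z j <| by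
      have : B / ε ^ Fintype.card ι < ‖z - lam j‖ - ε := by nlinarith [hfar j]
      exact (hB j).trans_lt ((div_lt_iff₀ (pow_pos hε _)).1 this)
  have hone : ∀ o : Option ι,
      ((saddlePoly lam c z).roots.filter (‖· - o.elim z lam‖ < ε)).card = 1 :=
    Multiset.card_filter_norm_sub_lt_eq_one
      (pairwise_norm_sub_option_elim_gt hsep fun k => by nlinarith [hfar k])
      (by rw [card_roots_saddlePoly, Fintype.card_option]) (Option.rec ⟨r₀, hr₀, hr₀z⟩ hlam)
  refine ⟨hone, fun u hu => ?_⟩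
  have hne := (saddlePoly_monic lam c z).ne_zero
  obtain ⟨o, ho⟩ := hloc u ((mem_roots hne).2 hu)
  classical
  refine eval_derivative_ne_zero_of_count_roots_le_one hne hu ?_
  rw [← Multiset.count_filter_of_pos (p := (‖· - o.elim z lam‖ < ε)) ho, ← hone o]
  exact Multiset.count_le_card _ _

theorem saddlePoly_roots_localized {ε : ℝ} (hε : 0 < ε)
    (hsep : Pairwise fun i j => 2 * ε < ‖lam i - lam j‖) :
    ∃ R : ℝ, 0 < R ∧ ∀ z : K, R < ‖z‖ →
      (((saddlePoly lam c z).roots.filter (fun u => ‖u - z‖ < ε)).card = 1)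
      ∧ (∀ j, ((saddlePoly lam c z).roots.filter (fun u => ‖u - lam j‖ < ε)).card = 1)
      ∧ (∀ u : K, (saddlePoly lam c z).eval u = 0 →
          (derivative (saddlePoly lam c z)).eval u ≠ 0) := by
  set M := ∑ k, ‖lam k‖
  set B := ∑ j, ‖c j * ∏ k ∈ univ.erase j, (lam j - lam k)‖
  have hM : ∀ k, ‖lam k‖ ≤ M := fun k => single_le_sum (fun k _ => norm_nonneg _) (mem_univ k)
  have hB : ∀ j, ‖c j * ∏ k ∈ univ.erase j, (lam j - lam k)‖ ≤ B := fun j =>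
    single_le_sum (f := fun j => ‖c j * ∏ k ∈ univ.erase j, (lam j - lam k)‖)
      (fun j _ => norm_nonneg _) (mem_univ j)
  have hM0 : 0 ≤ M := sum_nonneg fun k _ => norm_nonneg _
  have hB0 : 0 ≤ B := sum_nonneg fun j _ => norm_nonneg _
  refine ⟨(2 * Fintype.card ι + 2) * (M + ε) + 2 * (∑ j, ‖c j‖) / ε + B / ε ^ Fintype.card ι,
    by positivity, fun z hz => ?_⟩
  obtain ⟨hone, hsimple⟩ := saddlePoly_roots_localized_of_lt_norm lam c z hε hsep hM0 hM hB0 hB hz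
  exact ⟨hone none, fun j => hone (some j), hsimple⟩

end Analytic

theorem saddle_points_localized_for_large_z_general
    (d : ℕ) (lam : Fin d → ℂ)
    (a : Fin d → ℝ) (A : ℝ)
    (t : ℂ)
    (Q : ℂ → Polynomial ℂ)
    (hQ : Q = fun z =>
      C (t / (A : ℂ)) *
          ∑ j, C ((a j : ℂ)) * ∏ k ∈ Finset.univ.erase j, (X - C (lam k))
        + (X - C z) * ∏ j, (X - C (lam j)))
    (ε : ℝ) (hε : 0 < ε) (hεsep : ∀ i j, i ≠ j → 2 * ε < ‖lam i - lam j‖) :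
    ∃ R : ℝ, 0 < R ∧ ∀ z : ℂ, R < ‖z‖ →
      (((Q z).roots.filter (fun u => ‖u - z‖ < ε)).card = 1)
      ∧ (∀ j, ((Q z).roots.filter (fun u => ‖u - lam j‖ < ε)).card = 1)
      ∧ (∀ u : ℂ, (Q z).eval u = 0 → (Polynomial.derivative (Q z)).eval u ≠ 0) := by
  have hQ' : Q = saddlePoly lam (fun j => t / A * a j) := by
    rw [hQ]
    funext z
    simp only [saddlePoly, mul_sum, C_mul, mul_assoc]
  subst hQ'
  exact saddlePoly_roots_localized lam _ hε hεsep

/-- For large `|z|`, the saddle point polynomial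
`Q_{z,t}(u) = (t/α)Σ_j α_j ∏_{k≠j}(u−λ_k) + (u−z)∏_j(u−λ_j)` has exactly one root
(with multiplicity) in `B(z,ε)` and exactly one root in each `B(λ_j,ε)`,
`0 < ε < (1/2)·min_{i≠j}|λ_i−λ_j|`; in particular all `d+1` roots are simple. -/
theorem saddle_points_localized_for_large_z
    (d : ℕ) (lam : Fin d → ℂ) (hinj : Function.Injective lam)
    (a : Fin d → ℝ) (hpos : ∀ j, 0 < a j) (A : ℝ) (hA : A = ∑ j, a j)
    (t : ℂ) (ht : t ≠ 0)
    (Q : ℂ → Polynomial ℂ)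
    (hQ : Q = fun z =>
      C (t / (A : ℂ)) *
          ∑ j, C ((a j : ℂ)) * ∏ k ∈ Finset.univ.erase j, (X - C (lam k))
        + (X - C z) * ∏ j, (X - C (lam j)))
    (ε : ℝ) (hε : 0 < ε) (hεsep : ∀ i j, i ≠ j → 2 * ε < ‖lam i - lam j‖) :
    ∃ R : ℝ, 0 < R ∧ ∀ z : ℂ, R < ‖z‖ →
      (((Q z).roots.filter (fun u => ‖u - z‖ < ε)).card = 1)
      ∧ (∀ j, ((Q z).roots.filter (fun u => ‖u - lam j‖ < ε)).card = 1)
      ∧ (∀ u : ℂ, (Q z).eval u = 0 → (Polynomial.derivative (Q z)).eval u ≠ 0) :=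
  saddle_points_localized_for_large_z_general d lam a A t Q hQ ε hε hεsep
end
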